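/- arXiv:1910.01919 — 2 statements merged into one kernel-verified Lean document; each statement's English description precedes it below -/
import Mathlib

section
/- For a finite-state Markov reward process with transition matrix P, stationary distribution π, reward vector g(φ), and average reward λ(φ) = ∑_x π_x g_x(φ), differentiating the average-reward Bellman (Poisson) equation λ(φ)·1 + v(φ) = g(φ) + P(φ) v(φ) and taking the stationary-distribution inner product yields ∇λ(φ) = ∑_x π_x(φ) (∇g_x(φ) + ∑_{x'} ∇p_{xx'}(φ) v_{x'}(φ)), provided π(φ)ᵀ P(φ) = π(φ)ᵀ and π is differentiable. -/
open Finset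

/-- Differentiating the average-reward Poisson equation of a finite-state Markov
reward process and taking the stationary-distribution inner product:
`∇λ(φ) = ∑_x π_x(φ) (∇g_x(φ) + ∑_{x'} ∇p_{xx'}(φ) v_{x'}(φ))`. -/
theorem stmt14 {X : Type*} [Fintype X] {n : ℕ}
    (P : (Fin n → ℝ) → X → X → ℝ) (g : X → (Fin n → ℝ) → ℝ)
    (π : X → (Fin n → ℝ) → ℝ) (v : X → (Fin n → ℝ) → ℝ) (lam : (Fin n → ℝ) → ℝ)
    (hPdiff : ∀ x x', Differentiable ℝ (fun ψ => P ψ x x'))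
    (hgdiff : ∀ x, Differentiable ℝ (g x))
    (hπdiff : ∀ x, Differentiable ℝ (π x))
    (hrow : ∀ φ x, ∑ x', P φ x x' = 1)
    (hπsum : ∀ φ, ∑ x, π x φ = 1)
    (hstat : ∀ φ x', ∑ x, π x φ * P φ x x' = π x' φ)
    (hlam : ∀ φ, lam φ = ∑ x, π x φ * g x φ)
    (hpoisson : ∀ φ x, lam φ + v x φ = g x φ + ∑ x', P φ x x' * v x' φ)
    (φ : Fin n → ℝ) :
    fderiv ℝ lam φ =
      ∑ x, (π x φ) •
        (fderiv ℝ (g x) φ + ∑ x', (v x' φ) • fderiv ℝ (fun ψ => P ψ x x') φ) := by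
  classical
  set D : X → (Fin n → ℝ) →L[ℝ] ℝ := fun x => fderiv ℝ (π x) φ with hD
  set G : X → (Fin n → ℝ) →L[ℝ] ℝ := fun x => fderiv ℝ (g x) φ with hG
  set Q : X → X → (Fin n → ℝ) →L[ℝ] ℝ := fun x x' => fderiv ℝ (fun ψ => P ψ x x') φ with hQ
  -- Step 1: product rule on λ = ∑ π g
  have h1 : fderiv ℝ lam φ = ∑ x, (π x φ • G x + g x φ • D x) := by
    have hlamf : lam = fun ψ => ∑ x, π x ψ * g x ψ := funext hlam
    rw [hlamf, fderiv_fun_sum (A := fun x ψ => π x ψ * g x ψ) (fun x _ => ((hπdiff x φ).mul (hgdiff x φ)))]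
    exact Finset.sum_congr rfl fun x _ => fderiv_fun_mul (hπdiff x φ) (hgdiff x φ)
  -- Step 2: ∑ ∇π = 0
  have h0 : ∑ x, D x = 0 := by
    have hs : fderiv ℝ (fun ψ => ∑ x, π x ψ) φ = ∑ x, D x :=
      fderiv_fun_sum (fun x _ => hπdiff x φ)
    have hc : (fun ψ => ∑ x, π x ψ) = fun _ => (1:ℝ) := funext hπsum
    rw [hc] at hs
    simpa using hs.symm
  -- Step 3: differentiate stationarity
  have h3 : ∀ x', ∑ x, (P φ x x' • D x + π x φ • Q x x') = D x' := by
    intro x'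
    have he : (fun ψ => ∑ x, π x ψ * P ψ x x') = π x' := funext fun ψ => hstat ψ x'
    have hs : fderiv ℝ (fun ψ => ∑ x, π x ψ * P ψ x x') φ
        = ∑ x, (π x φ • Q x x' + P φ x x' • D x) := by
      rw [fderiv_fun_sum (A := fun x ψ => π x ψ * P ψ x x') (fun x _ => (hπdiff x φ).mul (hPdiff x x' φ))]
      exact Finset.sum_congr rfl fun x _ => fderiv_fun_mul (hπdiff x φ) (hPdiff x x' φ)
    rw [he] at hs
    have hs' : D x' = ∑ x, (π x φ • Q x x' + P φ x x' • D x) := hs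
    rw [hs']
    exact Finset.sum_congr rfl fun x _ => add_comm _ _
  have hg : ∀ x, g x φ = lam φ + v x φ - ∑ x', P φ x x' * v x' φ := fun x => by
    linarith [hpoisson φ x]
  rw [h1]
  refine ContinuousLinearMap.ext fun u => ?_
  have h0u : ∑ x, D x u = 0 := by
    have := congrArg (fun (L : (Fin n → ℝ) →L[ℝ] ℝ) => L u) h0
    simpa using this
  have h3u : ∀ x', ∑ x, (P φ x x' * D x u + π x φ * Q x x' u) = D x' u := by
    intro x'
    have := congrArg (fun (L : (Fin n → ℝ) →L[ℝ] ℝ) => L u) (h3 x')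
    simpa using this
  have h3u' : ∀ x', ∑ x, P φ x x' * D x u = D x' u - ∑ x, π x φ * Q x x' u := by
    intro x'
    have h := h3u x'
    rw [Finset.sum_add_distrib] at h
    linarith
  simp only [ContinuousLinearMap.sum_apply, ContinuousLinearMap.add_apply,
    ContinuousLinearMap.smul_apply, smul_eq_mul]
  have key : ∑ x, g x φ * D x u = ∑ x, π x φ * ∑ x', v x' φ * Q x x' u := by
    calc ∑ x, g x φ * D x u
        = ∑ x, ((lam φ * D x u + v x φ * D x u) - ∑ x', (P φ x x' * v x' φ) * D x u) := by
          refine Finset.sum_congr rfl fun x _ => ?_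
          rw [hg x, sub_mul, add_mul, Finset.sum_mul]
      _ = (lam φ * ∑ x, D x u + ∑ x, v x φ * D x u) - ∑ x, ∑ x', (P φ x x' * v x' φ) * D x u := by
          rw [Finset.sum_sub_distrib, Finset.sum_add_distrib, Finset.mul_sum]
      _ = ∑ x, v x φ * D x u - ∑ x', v x' φ * ∑ x, P φ x x' * D x u := by
          rw [h0u, mul_zero, zero_add, Finset.sum_comm]
          congr 1
          refine Finset.sum_congr rfl fun x' _ => ?_
          rw [Finset.mul_sum]
          exact Finset.sum_congr rfl fun x _ => by ring
      _ = ∑ x', v x' φ * ∑ x, π x φ * Q x x' u := by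
          simp only [h3u', mul_sub]
          rw [Finset.sum_sub_distrib]
          ring
      _ = ∑ x, π x φ * ∑ x', v x' φ * Q x x' u := by
          simp only [Finset.mul_sum]
          rw [Finset.sum_comm]
          exact Finset.sum_congr rfl fun x _ =>
            Finset.sum_congr rfl fun x' _ => by ring
  calc ∑ x, (π x φ * G x u + g x φ * D x u)
      = ∑ x, π x φ * G x u + ∑ x, g x φ * D x u := Finset.sum_add_distrib
    _ = ∑ x, π x φ * G x u + ∑ x, π x φ * ∑ x', v x' φ * Q x x' u := by rw [key]
    _ = ∑ x, π x φ * (G x u + ∑ x', v x' φ * Q x x' u) := by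
        rw [← Finset.sum_add_distrib]
        exact Finset.sum_congr rfl fun x _ => by ring
end

section
/- Combining the policy-gradient decomposition: with p_{xx'}(φ) = ∑_a μ_a(x,φ) p_{xx'}(a) and g_x(φ) = ∑_a μ_a(x,φ) g_{x,a}, and η_a(x,φ) = π_x(φ) μ_a(x,φ), ψ_a(x,φ) = ∇μ_a(x,φ)/μ_a(x,φ) (for μ_a > 0), the gradient formula ∇λ(φ) = ∑_x π_x(∇g_x + ∑_{x'} ∇p_{xx'} v_{x'}) can be rewritten as ∇λ(φ) = ∑_{x,a} η_a(x,φ) q_{x,a}(φ) ψ_a(x,φ), where q_{x,a}(φ) = (g_{x,a} − λ(φ)) + ∑_{x'} p_{xx'}(a) v_{x'}(φ). -/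
open Finset

/-- Lemma 1: with `p_{xx'}(φ) = ∑_a μ_a(x,φ) p_{xx'}(a)`,
`g_x(φ) = ∑_a μ_a(x,φ) g_{x,a}`, `η_a(x,φ) = π_x(φ) μ_a(x,φ)` and
`ψ_a(x,φ) = ∇μ_a(x,φ)/μ_a(x,φ)`, the gradient formula
`∇λ(φ) = ∑_x π_x(∇g_x + ∑_{x'} ∇p_{xx'} v_{x'})` can be rewritten as
`∇λ(φ) = ∑_{x,a} η_a(x,φ) q_{x,a}(φ) ψ_a(x,φ)` where
`q_{x,a}(φ) = (g_{x,a} − λ(φ)) + ∑_{x'} p_{xx'}(a) v_{x'}(φ)`. -/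
theorem stmt15 {X A : Type*} [Fintype X] [Fintype A] {n : ℕ}
    (μ : X → A → (Fin n → ℝ) → ℝ) (p : X → X → A → ℝ) (g : X → A → ℝ)
    (π : X → (Fin n → ℝ) → ℝ) (v : X → (Fin n → ℝ) → ℝ) (lam : (Fin n → ℝ) → ℝ)
    (hμpos : ∀ x a φ, 0 < μ x a φ)
    (hμdiff : ∀ x a, Differentiable ℝ (μ x a))
    (hμsum : ∀ x φ, ∑ a, μ x a φ = 1)
    (φ : Fin n → ℝ)
    (hgrad : fderiv ℝ lam φ =
      ∑ x, (π x φ) •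
        (fderiv ℝ (fun ψ => ∑ a, μ x a ψ * g x a) φ +
          ∑ x', (v x' φ) •
            fderiv ℝ (fun ψ => ∑ a, μ x a ψ * p x x' a) φ)) :
    fderiv ℝ lam φ =
      ∑ x, ∑ a,
        (π x φ * μ x a φ *
          ((g x a - lam φ) + ∑ x', p x x' a * v x' φ)) •
          ((μ x a φ)⁻¹ • fderiv ℝ (μ x a) φ) := by
  have hDsum : ∀ (x : X) (c : A → ℝ),
      fderiv ℝ (fun ψ => ∑ a, μ x a ψ * c a) φ
        = ∑ a, c a • fderiv ℝ (μ x a) φ := by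
    intro x c
    rw [fderiv_fun_sum (fun a _ => ((hμdiff x a φ).mul_const (c a)))]
    refine Finset.sum_congr rfl fun a _ => ?_
    rw [fderiv_mul_const (hμdiff x a φ)]
  have hDzero : ∀ x : X, (∑ a, fderiv ℝ (μ x a) φ) = 0 := by
    intro x
    have h1 : fderiv ℝ (fun ψ => ∑ a, μ x a ψ) φ = ∑ a, fderiv ℝ (μ x a) φ :=
      fderiv_fun_sum (fun a _ => hμdiff x a φ)
    have h2 : (fun ψ => ∑ a, μ x a ψ) = fun _ => (1 : ℝ) := by
      funext ψ; exact hμsum x ψ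
    rw [h2] at h1
    rw [← h1, fderiv_fun_const]
    rfl
  rw [hgrad]
  refine Finset.sum_congr rfl fun x _ => ?_
  have hcancel : ∀ a, ∀ c : ℝ,
      (π x φ * μ x a φ * c) • ((μ x a φ)⁻¹ • fderiv ℝ (μ x a) φ)
        = (π x φ * c) • fderiv ℝ (μ x a) φ := by
    intro a c
    rw [smul_smul]
    congr 1
    field_simp [(hμpos x a φ).ne']
  calc (π x φ) •
        (fderiv ℝ (fun ψ => ∑ a, μ x a ψ * g x a) φ +
          ∑ x', (v x' φ) • fderiv ℝ (fun ψ => ∑ a, μ x a ψ * p x x' a) φ)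
      = ∑ a, (π x φ * ((g x a - lam φ) + ∑ x', p x x' a * v x' φ)) •
          fderiv ℝ (μ x a) φ := by
        rw [hDsum]
        have h3 : ∀ x', (v x' φ) • fderiv ℝ (fun ψ => ∑ a, μ x a ψ * p x x' a) φ
            = ∑ a, (p x x' a * v x' φ) • fderiv ℝ (μ x a) φ := by
          intro x'
          rw [hDsum, Finset.smul_sum]
          refine Finset.sum_congr rfl fun a _ => ?_
          rw [smul_smul, mul_comm]
        simp_rw [h3]
        rw [Finset.sum_comm]
        have h4 : (∑ a, (lam φ) • fderiv ℝ (μ x a) φ) = 0 := by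
          rw [← Finset.smul_sum, hDzero, smul_zero]
        have : (∑ a, g x a • fderiv ℝ (μ x a) φ +
            ∑ a, ∑ x', (p x x' a * v x' φ) • fderiv ℝ (μ x a) φ)
            - ∑ a, (lam φ) • fderiv ℝ (μ x a) φ
            = ∑ a, ((g x a - lam φ) + ∑ x', p x x' a * v x' φ) •
              fderiv ℝ (μ x a) φ := by
          rw [← Finset.sum_add_distrib, ← Finset.sum_sub_distrib]
          refine Finset.sum_congr rfl fun a _ => ?_
          rw [← Finset.sum_smul]
          module
        have h5 : (∑ a, (π x φ * ((g x a - lam φ) + ∑ x', p x x' a * v x' φ)) •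
              fderiv ℝ (μ x a) φ)
            = π x φ • ∑ a, ((g x a - lam φ) + ∑ x', p x x' a * v x' φ) •
              fderiv ℝ (μ x a) φ := by
          rw [Finset.smul_sum]
          exact Finset.sum_congr rfl fun a _ => (smul_smul _ _ _).symm
        rw [h5, ← this, h4, sub_zero]
    _ = ∑ a, (π x φ * μ x a φ *
          ((g x a - lam φ) + ∑ x', p x x' a * v x' φ)) •
          ((μ x a φ)⁻¹ • fderiv ℝ (μ x a) φ) := by
        refine Finset.sum_congr rfl fun a _ => (hcancel a _).symm
end
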